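/- The vector-neuron ReLU is SO(3)-equivariant: fix a weight matrix W ∈ ℝ^{c×c}, and for u ∈ ℝ^{c×3} let q = W u and define VNReLU(u) ∈ ℝ^{c×3} per channel i by: VNReLU(u)_i = u_i if ⟨u_i, q_i⟩ ≥ 0, and VNReLU(u)_i = u_i − (⟨u_i, q_i⟩ / ‖q_i‖²) q_i otherwise, where u_i, q_i ∈ ℝ^3 are the i-th rows. Then for every u ∈ ℝ^{c×3} and every R ∈ SO(3), VNReLU(u R) = VNReLU(u) R. -/
import Mathlib


open scoped Matrix

/-- The vector-neuron ReLU with weight matrix `W ∈ ℝ^{c×c}`: with `q = W u`, the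
`i`-th row of the output is `u_i` if `⟨u_i, q_i⟩ ≥ 0`, and
`u_i − (⟨u_i, q_i⟩ / ‖q_i‖²) q_i` otherwise. -/
noncomputable def VNReLU {c : ℕ} (W : Matrix (Fin c) (Fin c) ℝ)
    (u : Matrix (Fin c) (Fin 3) ℝ) : Matrix (Fin c) (Fin 3) ℝ :=
  Matrix.of fun i k =>
    if 0 ≤ ∑ j : Fin 3, u i j * (W * u) i j then u i k
    else u i k -
      ((∑ j : Fin 3, u i j * (W * u) i j) / (∑ j : Fin 3, ((W * u) i j) ^ 2)) *
        (W * u) i k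

lemma dot_rot (R : Matrix (Fin 3) (Fin 3) ℝ) (hR : R * Rᵀ = 1) (v w : Fin 3 → ℝ) :
    ∑ j, (∑ k, v k * R k j) * (∑ l, w l * R l j) = ∑ k, v k * w k := by
  have h : ∀ k l, ∑ j, R k j * R l j = (1 : Matrix (Fin 3) (Fin 3) ℝ) k l := by
    intro k l
    rw [← hR]
    simp [Matrix.mul_apply, Matrix.transpose_apply]
  calc ∑ j, (∑ k, v k * R k j) * (∑ l, w l * R l j)
      = ∑ j, ∑ k, ∑ l, v k * w l * (R k j * R l j) := by
        refine Finset.sum_congr rfl fun j _ => ?_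
        rw [Finset.sum_mul_sum]
        refine Finset.sum_congr rfl fun k _ => Finset.sum_congr rfl fun l _ => by ring
    _ = ∑ k, ∑ l, v k * w l * ∑ j, R k j * R l j := by
        rw [Finset.sum_comm]
        refine Finset.sum_congr rfl fun k _ => ?_
        rw [Finset.sum_comm]
        simp [Finset.mul_sum]
    _ = ∑ k, v k * w k := by
        simp_rw [h, Matrix.one_apply]
        simp

/-- The vector-neuron ReLU is SO(3)-equivariant: for every `u ∈ ℝ^{c×3}` and every
rotation `R ∈ SO(3)`, `VNReLU(u R) = VNReLU(u) R`. -/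
theorem VNReLU_equivariant {c : ℕ} (W : Matrix (Fin c) (Fin c) ℝ)
    (u : Matrix (Fin c) (Fin 3) ℝ) (R : Matrix (Fin 3) (Fin 3) ℝ)
    (hR : R * Rᵀ = 1) (hdet : R.det = 1) :
    VNReLU W (u * R) = VNReLU W u * R := by
  have hassoc : W * (u * R) = (W * u) * R := (Matrix.mul_assoc W u R).symm
  ext i k
  have h1 : ∑ j : Fin 3, (u * R) i j * (W * (u * R)) i j
      = ∑ j : Fin 3, u i j * (W * u) i j := by
    rw [hassoc]
    simpa [Matrix.mul_apply] using dot_rot R hR (u i) ((W * u) i)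
  have h2 : ∑ j : Fin 3, ((W * (u * R)) i j) ^ 2
      = ∑ j : Fin 3, ((W * u) i j) ^ 2 := by
    rw [hassoc]
    simpa [Matrix.mul_apply, sq] using dot_rot R hR ((W * u) i) ((W * u) i)
  rw [Matrix.mul_apply]
  simp only [VNReLU, Matrix.of_apply, h1, h2]
  split_ifs with h
  · rfl
  · simp only [sub_mul]
    rw [Finset.sum_sub_distrib]
    congr 1
    simp_rw [Matrix.mul_apply, Finset.mul_sum, Finset.sum_mul]
    rw [Finset.sum_comm]
    exact Finset.sum_congr rfl fun _ _ => Finset.sum_congr rfl fun _ _ => by ring
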